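/- Let g : ℝ² → GL(n,ℂ) be smooth, and let Φ, Φ' : ℝ² → M_n(ℂ) be smooth matrix functions satisfying the Bäcklund system Φ'_x = Φ_t + [g⁻¹g_t, Φ] and -Φ'_t = Φ_x + [g⁻¹g_x, Φ]. If additionally g solves the chiral field equation (g⁻¹g_x)_x + (g⁻¹g_t)_t = 0, then Φ' satisfies the linearized chiral symmetry condition ∂ₓ(Φ'_x + [g⁻¹g_x, Φ']) + ∂ₜ(Φ'_t + [g⁻¹g_t, Φ']) = 0. -/

import Mathlib

attribute [local instance] Matrix.normedAddCommGroup Matrix.normedSpace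

/-- partial derivative in the first variable, for matrix-valued functions -/
noncomputable def Px {n : ℕ} (f : ℝ → ℝ → Matrix (Fin n) (Fin n) ℂ) :
    ℝ → ℝ → Matrix (Fin n) (Fin n) ℂ := fun x t => deriv (fun x' => f x' t) x

/-- partial derivative in the second variable, for matrix-valued functions -/
noncomputable def Pt {n : ℕ} (f : ℝ → ℝ → Matrix (Fin n) (Fin n) ℂ) :
    ℝ → ℝ → Matrix (Fin n) (Fin n) ℂ := fun x t => deriv (fun t' => f x t') t

set_option maxHeartbeats 1000000

noncomputable def mulL (n : ℕ) : Matrix (Fin n) (Fin n) ℂ →L[ℝ]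
    Matrix (Fin n) (Fin n) ℂ →L[ℝ] Matrix (Fin n) (Fin n) ℂ :=
  LinearMap.toContinuousLinearMap
    { toFun := fun a =>
        LinearMap.toContinuousLinearMap (LinearMap.mul ℝ (Matrix (Fin n) (Fin n) ℂ) a)
      map_add' := by intro a b; ext c; simp [add_mul]
      map_smul' := by intro r a; ext c; simp [smul_mul_assoc] }

section Tools
variable {n : ℕ} {f h : ℝ → ℝ → Matrix (Fin n) (Fin n) ℂ} {x t : ℝ}

@[simp] lemma mulL_apply (a b : Matrix (Fin n) (Fin n) ℂ) : mulL n a b = a * b := by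
  simp [mulL]

lemma hasDerivAt_matmul {u v : ℝ → Matrix (Fin n) (Fin n) ℂ}
    {u' v' : Matrix (Fin n) (Fin n) ℂ} {s : ℝ}
    (hu : HasDerivAt u u' s) (hv : HasDerivAt v v' s) :
    HasDerivAt (fun y => u y * v y) (u' * v s + u s * v') s := by
  have h := ((mulL n).isBoundedBilinearMap.hasFDerivAt (u s, v s)).comp_hasDerivAt s
    (hu.prodMk hv)
  simp [add_comm, Function.comp_def] at h
  exact h

lemma contDiff_matmul {E : Type*} [NormedAddCommGroup E] [NormedSpace ℝ E]
    {u v : E → Matrix (Fin n) (Fin n) ℂ} (hu : ContDiff ℝ (⊤ : ℕ∞) u) (hv : ContDiff ℝ (⊤ : ℕ∞) v) :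
    ContDiff ℝ (⊤ : ℕ∞) (fun y => u y * v y) := by
  have h := ((mulL n).isBoundedBilinearMap.contDiff (n := (⊤ : ℕ∞))).comp (hu.prodMk hv)
  simp [Function.comp_def] at h
  exact h

lemma hasDerivAt_sliceX (hf : DifferentiableAt ℝ (fun p : ℝ × ℝ => f p.1 p.2) (x, t)) :
    HasDerivAt (fun x' => f x' t) (fderiv ℝ (fun p : ℝ × ℝ => f p.1 p.2) (x, t) (1, 0)) x := by
  have h := hf.hasFDerivAt.comp_hasDerivAt x ((hasDerivAt_id x).prodMk (hasDerivAt_const x t))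
  simp [Function.comp_def] at h
  exact h

lemma hasDerivAt_sliceT (hf : DifferentiableAt ℝ (fun p : ℝ × ℝ => f p.1 p.2) (x, t)) :
    HasDerivAt (fun t' => f x t') (fderiv ℝ (fun p : ℝ × ℝ => f p.1 p.2) (x, t) (0, 1)) t := by
  have h := hf.hasFDerivAt.comp_hasDerivAt t ((hasDerivAt_const t x).prodMk (hasDerivAt_id t))
  simp [Function.comp_def] at h
  exact h

lemma Px_eq (hf : DifferentiableAt ℝ (fun p : ℝ × ℝ => f p.1 p.2) (x, t)) :
    Px f x t = fderiv ℝ (fun p : ℝ × ℝ => f p.1 p.2) (x, t) (1, 0) :=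
  (hasDerivAt_sliceX hf).deriv

lemma Pt_eq (hf : DifferentiableAt ℝ (fun p : ℝ × ℝ => f p.1 p.2) (x, t)) :
    Pt f x t = fderiv ℝ (fun p : ℝ × ℝ => f p.1 p.2) (x, t) (0, 1) :=
  (hasDerivAt_sliceT hf).deriv

lemma hasDerivAt_Px (hf : ContDiff ℝ (⊤ : ℕ∞) (fun p : ℝ × ℝ => f p.1 p.2)) (x t : ℝ) :
    HasDerivAt (fun x' => f x' t) (Px f x t) x :=
  (hasDerivAt_sliceX (hf.differentiable (by simp) (x, t))).differentiableAt.hasDerivAt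

lemma hasDerivAt_Pt (hf : ContDiff ℝ (⊤ : ℕ∞) (fun p : ℝ × ℝ => f p.1 p.2)) (x t : ℝ) :
    HasDerivAt (fun t' => f x t') (Pt f x t) t :=
  (hasDerivAt_sliceT (hf.differentiable (by simp) (x, t))).differentiableAt.hasDerivAt

lemma contDiff_Px (hf : ContDiff ℝ (⊤ : ℕ∞) (fun p : ℝ × ℝ => f p.1 p.2)) :
    ContDiff ℝ (⊤ : ℕ∞) (fun p : ℝ × ℝ => Px f p.1 p.2) := by
  have he : (fun p : ℝ × ℝ => Px f p.1 p.2)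
      = fun p : ℝ × ℝ => fderiv ℝ (fun q : ℝ × ℝ => f q.1 q.2) p (1, 0) := by
    funext p
    exact Px_eq (hf.differentiable (by simp) p)
  rw [he]
  exact (hf.fderiv_right (le_of_eq (by simp))).clm_apply contDiff_const

lemma contDiff_Pt (hf : ContDiff ℝ (⊤ : ℕ∞) (fun p : ℝ × ℝ => f p.1 p.2)) :
    ContDiff ℝ (⊤ : ℕ∞) (fun p : ℝ × ℝ => Pt f p.1 p.2) := by
  have he : (fun p : ℝ × ℝ => Pt f p.1 p.2)
      = fun p : ℝ × ℝ => fderiv ℝ (fun q : ℝ × ℝ => f q.1 q.2) p (0, 1) := by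
    funext p
    exact Pt_eq (hf.differentiable (by simp) p)
  rw [he]
  exact (hf.fderiv_right (le_of_eq (by simp))).clm_apply contDiff_const

lemma Px_add (hf : ContDiff ℝ (⊤ : ℕ∞) (fun p : ℝ × ℝ => f p.1 p.2))
    (hh : ContDiff ℝ (⊤ : ℕ∞) (fun p : ℝ × ℝ => h p.1 p.2)) (x t : ℝ) :
    Px (fun x' t' => f x' t' + h x' t') x t = Px f x t + Px h x t :=
  ((hasDerivAt_Px hf x t).add (hasDerivAt_Px hh x t)).deriv

lemma Pt_add (hf : ContDiff ℝ (⊤ : ℕ∞) (fun p : ℝ × ℝ => f p.1 p.2))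
    (hh : ContDiff ℝ (⊤ : ℕ∞) (fun p : ℝ × ℝ => h p.1 p.2)) (x t : ℝ) :
    Pt (fun x' t' => f x' t' + h x' t') x t = Pt f x t + Pt h x t :=
  ((hasDerivAt_Pt hf x t).add (hasDerivAt_Pt hh x t)).deriv

lemma Px_sub (hf : ContDiff ℝ (⊤ : ℕ∞) (fun p : ℝ × ℝ => f p.1 p.2))
    (hh : ContDiff ℝ (⊤ : ℕ∞) (fun p : ℝ × ℝ => h p.1 p.2)) (x t : ℝ) :
    Px (fun x' t' => f x' t' - h x' t') x t = Px f x t - Px h x t :=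
  ((hasDerivAt_Px hf x t).sub (hasDerivAt_Px hh x t)).deriv

lemma Pt_sub (hf : ContDiff ℝ (⊤ : ℕ∞) (fun p : ℝ × ℝ => f p.1 p.2))
    (hh : ContDiff ℝ (⊤ : ℕ∞) (fun p : ℝ × ℝ => h p.1 p.2)) (x t : ℝ) :
    Pt (fun x' t' => f x' t' - h x' t') x t = Pt f x t - Pt h x t :=
  ((hasDerivAt_Pt hf x t).sub (hasDerivAt_Pt hh x t)).deriv

lemma Px_neg (hf : ContDiff ℝ (⊤ : ℕ∞) (fun p : ℝ × ℝ => f p.1 p.2)) (x t : ℝ) :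
    Px (fun x' t' => -(f x' t')) x t = -Px f x t :=
  (hasDerivAt_Px hf x t).neg.deriv

lemma Pt_neg (hf : ContDiff ℝ (⊤ : ℕ∞) (fun p : ℝ × ℝ => f p.1 p.2)) (x t : ℝ) :
    Pt (fun x' t' => -(f x' t')) x t = -Pt f x t :=
  (hasDerivAt_Pt hf x t).neg.deriv

lemma Px_mul (hf : ContDiff ℝ (⊤ : ℕ∞) (fun p : ℝ × ℝ => f p.1 p.2))
    (hh : ContDiff ℝ (⊤ : ℕ∞) (fun p : ℝ × ℝ => h p.1 p.2)) (x t : ℝ) :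
    Px (fun x' t' => f x' t' * h x' t') x t = Px f x t * h x t + f x t * Px h x t :=
  (hasDerivAt_matmul (hasDerivAt_Px hf x t) (hasDerivAt_Px hh x t)).deriv

lemma Pt_mul (hf : ContDiff ℝ (⊤ : ℕ∞) (fun p : ℝ × ℝ => f p.1 p.2))
    (hh : ContDiff ℝ (⊤ : ℕ∞) (fun p : ℝ × ℝ => h p.1 p.2)) (x t : ℝ) :
    Pt (fun x' t' => f x' t' * h x' t') x t = Pt f x t * h x t + f x t * Pt h x t :=
  (hasDerivAt_matmul (hasDerivAt_Pt hf x t) (hasDerivAt_Pt hh x t)).deriv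

lemma Px_Pt_comm (hf : ContDiff ℝ (⊤ : ℕ∞) (fun p : ℝ × ℝ => f p.1 p.2)) (x t : ℝ) :
    Px (fun x' t' => Pt f x' t') x t = Pt (fun x' t' => Px f x' t') x t := by
  set F : ℝ × ℝ → Matrix (Fin n) (Fin n) ℂ := fun p => f p.1 p.2 with hF
  have hdF : Differentiable ℝ F := hf.differentiable (by simp)
  have hfd := hf.fderiv_right (m := (⊤ : ℕ∞)) (le_of_eq (by simp))
  have h2 : HasFDerivAt (fderiv ℝ F) (fderiv ℝ (fderiv ℝ F) (x, t)) (x, t) :=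
    (hfd.differentiable (by simp) (x, t)).hasFDerivAt
  have key : ∀ v w : ℝ × ℝ,
      fderiv ℝ (fun p : ℝ × ℝ => fderiv ℝ F p v) (x, t) w
        = fderiv ℝ (fderiv ℝ F) (x, t) w v := by
    intro v w
    have h3 : HasFDerivAt (fun p : ℝ × ℝ => fderiv ℝ F p v)
        ((fderiv ℝ (fderiv ℝ F) (x, t)).flip v) (x, t) := by
      have := h2.clm_apply (hasFDerivAt_const v (x, t))
      refine this.congr_fderiv (ContinuousLinearMap.ext fun y => ?_)
      simp
      exact map_zero (fderiv ℝ F (x, t))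
    exact (congrArg (fun L => L w) h3.fderiv).trans rfl
  have hsymm := second_derivative_symmetric (fun y => (hdF y).hasFDerivAt) h2 (0, 1) (1, 0)
  have e1 : (fun p : ℝ × ℝ => Pt f p.1 p.2) = fun p : ℝ × ℝ => fderiv ℝ F p (0, 1) := by
    funext p; exact Pt_eq (hdF p)
  have e2 : (fun p : ℝ × ℝ => Px f p.1 p.2) = fun p : ℝ × ℝ => fderiv ℝ F p (1, 0) := by
    funext p; exact Px_eq (hdF p)
  have l1 : Px (fun x' t' => Pt f x' t') x t
      = fderiv ℝ (fun p : ℝ × ℝ => fderiv ℝ F p (0, 1)) (x, t) (1, 0) := by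
    have := Px_eq (f := fun x' t' => Pt f x' t') (x := x) (t := t)
      (((contDiff_Pt hf).differentiable (by simp)) (x, t))
    rw [this]
    rw [show (fun p : ℝ × ℝ => Pt f p.1 p.2) = fun p : ℝ × ℝ => fderiv ℝ F p (0, 1) from e1]
  have l2 : Pt (fun x' t' => Px f x' t') x t
      = fderiv ℝ (fun p : ℝ × ℝ => fderiv ℝ F p (1, 0)) (x, t) (0, 1) := by
    have := Pt_eq (f := fun x' t' => Px f x' t') (x := x) (t := t)
      (((contDiff_Px hf).differentiable (by simp)) (x, t))
    rw [this]
    rw [show (fun p : ℝ × ℝ => Px f p.1 p.2) = fun p : ℝ × ℝ => fderiv ℝ F p (1, 0) from e2]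
  rw [l1, l2, key (0,1) (1,0), key (1,0) (0,1)]; exact hsymm.symm

end Tools

/-- The Bäcklund system for the chiral field equation produces a new solution Φ'"'"' of the
linearized symmetry condition. -/
theorem chiral_backlund {n : ℕ} (g ginv Φ Φ' : ℝ → ℝ → Matrix (Fin n) (Fin n) ℂ)
    (hg : ContDiff ℝ (⊤ : ℕ∞) (fun p : ℝ × ℝ => g p.1 p.2))
    (hginv : ContDiff ℝ (⊤ : ℕ∞) (fun p : ℝ × ℝ => ginv p.1 p.2))
    (hΦ : ContDiff ℝ (⊤ : ℕ∞) (fun p : ℝ × ℝ => Φ p.1 p.2))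
    (hΦ' : ContDiff ℝ (⊤ : ℕ∞) (fun p : ℝ × ℝ => Φ' p.1 p.2))
    (hinv : ∀ x t, g x t * ginv x t = 1 ∧ ginv x t * g x t = 1)
    (hBT1 : ∀ x t, Px Φ' x t = Pt Φ x t
        + ((ginv x t * Pt g x t) * Φ x t - Φ x t * (ginv x t * Pt g x t)))
    (hBT2 : ∀ x t, -Pt Φ' x t = Px Φ x t
        + ((ginv x t * Px g x t) * Φ x t - Φ x t * (ginv x t * Px g x t)))
    (hsol : ∀ x t, Px (fun x' t' => ginv x' t' * Px g x' t') x t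
        + Pt (fun x' t' => ginv x' t' * Pt g x' t') x t = 0) :
    ∀ x t,
      Px (fun x' t' => Px Φ' x' t'
          + ((ginv x' t' * Px g x' t') * Φ' x' t' - Φ' x' t' * (ginv x' t' * Px g x' t'))) x t
      + Pt (fun x' t' => Pt Φ' x' t'
          + ((ginv x' t' * Pt g x' t') * Φ' x' t' - Φ' x' t' * (ginv x' t' * Pt g x' t'))) x t
      = 0 := by
  intro x t
  -- smoothness facts
  have hPxg := contDiff_Px hg
  have hPtg := contDiff_Pt hg
  have hPxΦ := contDiff_Px hΦ
  have hPtΦ := contDiff_Pt hΦ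
  have hA : ContDiff ℝ (⊤ : ℕ∞) (fun p : ℝ × ℝ => ginv p.1 p.2 * Px g p.1 p.2) :=
    contDiff_matmul hginv hPxg
  have hB : ContDiff ℝ (⊤ : ℕ∞) (fun p : ℝ × ℝ => ginv p.1 p.2 * Pt g p.1 p.2) :=
    contDiff_matmul hginv hPtg
  -- elementary HasDerivAt facts in the x-direction
  have dginv_x := hasDerivAt_Px hginv x t
  have dg_x := hasDerivAt_Px hg x t
  have dΦ_x := hasDerivAt_Px hΦ x t
  have dΦ'_x := hasDerivAt_Px hΦ' x t
  have dPtg_x := hasDerivAt_Px hPtg x t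
  have dPtΦ_x := hasDerivAt_Px hPtΦ x t
  have dA_x := hasDerivAt_Px (f := fun x t => ginv x t * Px g x t) hA x t
  have dB_x := hasDerivAt_Px (f := fun x t => ginv x t * Pt g x t) hB x t
  -- elementary HasDerivAt facts in the t-direction
  have dginv_t := hasDerivAt_Pt hginv x t
  have dg_t := hasDerivAt_Pt hg x t
  have dΦ_t := hasDerivAt_Pt hΦ x t
  have dΦ'_t := hasDerivAt_Pt hΦ' x t
  have dPxg_t := hasDerivAt_Pt hPxg x t
  have dPxΦ_t := hasDerivAt_Pt hPxΦ x t
  have dA_t := hasDerivAt_Pt (f := fun x t => ginv x t * Px g x t) hA x t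
  have dB_t := hasDerivAt_Pt (f := fun x t => ginv x t * Pt g x t) hB x t
  -- derivative of the inverse, x-direction
  have e_ivx : Px ginv x t = -(ginv x t * Px g x t * ginv x t) := by
    have hone : HasDerivAt (fun x' => g x' t * ginv x' t) 0 x := by
      have hconst : (fun x' => g x' t * ginv x' t)
          = fun _ => (1 : Matrix (Fin n) (Fin n) ℂ) := funext fun x' => (hinv x' t).1
      rw [hconst]; exact hasDerivAt_const x 1
    have h0 : Px g x t * ginv x t + g x t * Px ginv x t = 0 :=
      (hasDerivAt_matmul dg_x dginv_x).unique hone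
    have h2 : g x t * Px ginv x t = -(Px g x t * ginv x t) :=
      eq_neg_of_add_eq_zero_right h0
    calc Px ginv x t = ginv x t * g x t * Px ginv x t := by rw [(hinv x t).2, one_mul]
      _ = ginv x t * (g x t * Px ginv x t) := by rw [mul_assoc]
      _ = ginv x t * -(Px g x t * ginv x t) := by rw [h2]
      _ = -(ginv x t * Px g x t * ginv x t) := by rw [mul_neg, mul_assoc]
  -- derivative of the inverse, t-direction
  have e_ivt : Pt ginv x t = -(ginv x t * Pt g x t * ginv x t) := by
    have hone : HasDerivAt (fun t' => g x t' * ginv x t') 0 t := by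
      have hconst : (fun t' => g x t' * ginv x t')
          = fun _ => (1 : Matrix (Fin n) (Fin n) ℂ) := funext fun t' => (hinv x t').1
      rw [hconst]; exact hasDerivAt_const t 1
    have h0 : Pt g x t * ginv x t + g x t * Pt ginv x t = 0 :=
      (hasDerivAt_matmul dg_t dginv_t).unique hone
    have h2 : g x t * Pt ginv x t = -(Pt g x t * ginv x t) :=
      eq_neg_of_add_eq_zero_right h0
    calc Pt ginv x t = ginv x t * g x t * Pt ginv x t := by rw [(hinv x t).2, one_mul]
      _ = ginv x t * (g x t * Pt ginv x t) := by rw [mul_assoc]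
      _ = ginv x t * -(Pt g x t * ginv x t) := by rw [h2]
      _ = -(ginv x t * Pt g x t * ginv x t) := by rw [mul_neg, mul_assoc]
  -- Clairaut
  have cg : Px (fun x' t' => Pt g x' t') x t = Pt (fun x' t' => Px g x' t') x t :=
    Px_Pt_comm hg x t
  have cΦ : Px (fun x' t' => Pt Φ x' t') x t = Pt (fun x' t' => Px Φ x' t') x t :=
    Px_Pt_comm hΦ x t
  -- expansions of the mixed derivatives of A and B
  have e_xB : Px (fun x' t' => ginv x' t' * Pt g x' t') x t
      = Px ginv x t * Pt g x t + ginv x t * Px (fun x' t' => Pt g x' t') x t :=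
    dB_x.unique (hasDerivAt_matmul dginv_x dPtg_x)
  have e_tA : Pt (fun x' t' => ginv x' t' * Px g x' t') x t
      = Pt ginv x t * Px g x t + ginv x t * Pt (fun x' t' => Px g x' t') x t :=
    dA_t.unique (hasDerivAt_matmul dginv_t dPxg_t)
  -- the Bäcklund relations as equalities of functions / substituted derivatives
  have hE1 : Px Φ' = fun x t => Pt Φ x t
      + ((ginv x t * Pt g x t) * Φ x t - Φ x t * (ginv x t * Pt g x t)) :=
    funext fun x => funext fun t => hBT1 x t
  have hE2 : Pt Φ' = fun x t => -(Px Φ x t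
      + ((ginv x t * Px g x t) * Φ x t - Φ x t * (ginv x t * Px g x t))) := by
    funext x t
    rw [← hBT2 x t, neg_neg]
  have dΦ'_x' : HasDerivAt (fun x' => Φ' x' t)
      (Pt Φ x t + ((ginv x t * Pt g x t) * Φ x t - Φ x t * (ginv x t * Pt g x t))) x := by
    rw [← hBT1 x t]; exact dΦ'_x
  have dΦ'_t' : HasDerivAt (fun t' => Φ' x t')
      (-(Px Φ x t + ((ginv x t * Px g x t) * Φ x t - Φ x t * (ginv x t * Px g x t)))) t := by
    rw [← hBT2 x t, neg_neg]; exact dΦ'_t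
  -- expansion of the big Px term
  have EX : Px (fun x' t' => Px Φ' x' t'
        + ((ginv x' t' * Px g x' t') * Φ' x' t' - Φ' x' t' * (ginv x' t' * Px g x' t'))) x t
      = (Px (fun x' t' => Pt Φ x' t') x t
          + (Px (fun x' t' => ginv x' t' * Pt g x' t') x t * Φ x t
              + ginv x t * Pt g x t * Px Φ x t
            - (Px Φ x t * (ginv x t * Pt g x t)
              + Φ x t * Px (fun x' t' => ginv x' t' * Pt g x' t') x t)))
        + (Px (fun x' t' => ginv x' t' * Px g x' t') x t * Φ' x t
            + ginv x t * Px g x t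
              * (Pt Φ x t + ((ginv x t * Pt g x t) * Φ x t - Φ x t * (ginv x t * Pt g x t)))
          - ((Pt Φ x t + ((ginv x t * Pt g x t) * Φ x t - Φ x t * (ginv x t * Pt g x t)))
                * (ginv x t * Px g x t)
            + Φ' x t * Px (fun x' t' => ginv x' t' * Px g x' t') x t)) := by
    simp only [hE1]
    exact ((dPtΦ_x.add ((hasDerivAt_matmul dB_x dΦ_x).sub
        (hasDerivAt_matmul dΦ_x dB_x))).add
      ((hasDerivAt_matmul dA_x dΦ'_x').sub (hasDerivAt_matmul dΦ'_x' dA_x))).deriv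
  -- expansion of the big Pt term
  have ET : Pt (fun x' t' => Pt Φ' x' t'
        + ((ginv x' t' * Pt g x' t') * Φ' x' t' - Φ' x' t' * (ginv x' t' * Pt g x' t'))) x t
      = (-(Pt (fun x' t' => Px Φ x' t') x t
          + (Pt (fun x' t' => ginv x' t' * Px g x' t') x t * Φ x t
              + ginv x t * Px g x t * Pt Φ x t
            - (Pt Φ x t * (ginv x t * Px g x t)
              + Φ x t * Pt (fun x' t' => ginv x' t' * Px g x' t') x t))))
        + (Pt (fun x' t' => ginv x' t' * Pt g x' t') x t * Φ' x t
            + ginv x t * Pt g x t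
              * (-(Px Φ x t + ((ginv x t * Px g x t) * Φ x t - Φ x t * (ginv x t * Px g x t))))
          - ((-(Px Φ x t + ((ginv x t * Px g x t) * Φ x t - Φ x t * (ginv x t * Px g x t))))
                * (ginv x t * Pt g x t)
            + Φ' x t * Pt (fun x' t' => ginv x' t' * Pt g x' t') x t)) := by
    simp only [hE2]
    exact (((dPxΦ_t.add ((hasDerivAt_matmul dA_t dΦ_t).sub
        (hasDerivAt_matmul dΦ_t dA_t))).neg).add
      ((hasDerivAt_matmul dB_t dΦ'_t').sub (hasDerivAt_matmul dΦ'_t' dB_t))).deriv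
  -- chiral equation at the point
  have htB : Pt (fun x' t' => ginv x' t' * Pt g x' t') x t
      = -Px (fun x' t' => ginv x' t' * Px g x' t') x t :=
    eq_neg_of_add_eq_zero_right (hsol x t)
  -- put everything together
  rw [EX, ET, cΦ, e_xB, e_tA, e_ivx, e_ivt, cg, htB]
  noncomm_ring
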